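/- Let P be a nonnegative stable n×n matrix and z ∈ ℝ^n with Pz ≤ z. If z_S ≥ 0 for some set S ⊆ {1,…,n} containing at least one element of each critical class of P, then z ≥ 0. -/

import Mathlib

noncomputable section
open Filter Topology Set
open scoped Classical

/-- A square real matrix is *stable* if all of its orbits are bounded. -/
def MatStable {ι : Type*} [Fintype ι] [DecidableEq ι] (P : Matrix ι ι ℝ) : Prop :=
  ∀ x : ι → ℝ, ∃ c : ℝ, ∀ k : ℕ, ‖(P ^ k).mulVec x‖ ≤ c

/-- Spectral radius of a real square matrix, via its complex spectrum. -/
def SpecRad {ι : Type*} [Fintype ι] (Q : Matrix ι ι ℝ) : ℝ :=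
  haveI := Classical.decEq ι
  sSup {r : ℝ | ∃ μ : ℂ, μ ∈ spectrum ℂ (Q.map (fun a => (a : ℂ))) ∧ r = ‖μ‖}

/-- `i` has access to `j` in the digraph of the nonnegative matrix `P`. -/
def AccessM {n : ℕ} (P : Matrix (Fin n) (Fin n) ℝ) : Fin n → Fin n → Prop :=
  Relation.ReflTransGen (fun i j => 0 < P i j)

/-- `C` is a class of `P` (an equivalence class of mutual access). -/
def IsClass {n : ℕ} (P : Matrix (Fin n) (Fin n) ℝ) (C : Set (Fin n)) : Prop :=
  ∃ i, C = {j | AccessM P i j ∧ AccessM P j i}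

/-- Spectral radius of the principal submatrix `P_{CC}`. -/
def SpecRadOn {n : ℕ} (P : Matrix (Fin n) (Fin n) ℝ) (C : Set (Fin n)) : ℝ :=
  haveI : Fintype C := Fintype.ofFinite _
  SpecRad (Matrix.of fun i j : C => P i.1 j.1)

/-- A critical class of a stable nonnegative matrix. -/
def IsCriticalClass {n : ℕ} (P : Matrix (Fin n) (Fin n) ℝ) (C : Set (Fin n)) : Prop :=
  IsClass P C ∧ SpecRadOn P C = 1

/-- The set of critical nodes of `P`. -/
def CriticalNodes {n : ℕ} (P : Matrix (Fin n) (Fin n) ℝ) : Set (Fin n) :=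
  {i | ∃ C, IsCriticalClass P C ∧ i ∈ C}

/-- The subdifferential of `f` at `v` relative to the domain `D`. -/
def Subdiff {m n : ℕ} (f : (Fin m → ℝ) → (Fin n → ℝ)) (D : Set (Fin m → ℝ))
    (v : Fin m → ℝ) : Set (Matrix (Fin n) (Fin m) ℝ) :=
  {M | ∀ x ∈ D, M.mulVec (x - v) ≤ f x - f v}

/-!
Suppose `z` has a negative entry. Its negative part `u = z⁻` is nonzero, nonnegative, vanishes on
`S`, and satisfies `u ≤ P u`; by stability the increasing orbit `Pᵏ u` converges to a fixed vector
`v ≥ u`. With `M` the largest ratio `uᵢ / vᵢ`, the vector `t = M v - u` is nonnegative with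
`P t ≤ t` and vanishes somewhere on the support of `v`. The zero set of `t` is closed under access
and the support of `v` under reverse access. Hence for a class `C` that is final among the indices
where `v > 0 = t`, `v` vanishes at every index outside `C` that `C` has access to, so `v_C` is a
fixed vector of `P_CC`; as the powers of `P_CC` are bounded, `C` is critical. But at a point
`s ∈ C ∩ S` we get `t s = M v s > 0`.
-/

open Matrix

section Nonneg

variable {ι : Type*} [Fintype ι] {P : Matrix ι ι ℝ}

lemma mulVec_mono_of_nonneg (hP : ∀ i j, 0 ≤ P i j) {x y : ι → ℝ} (h : x ≤ y) :
    P *ᵥ x ≤ P *ᵥ y :=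
  fun i => Finset.sum_le_sum fun j _ => mul_le_mul_of_nonneg_left (h j) (hP i j)

lemma mul_le_mulVec_apply (hP : ∀ i j, 0 ≤ P i j) {x : ι → ℝ} (hx : 0 ≤ x) (i j : ι) :
    P i j * x j ≤ (P *ᵥ x) i :=
  Finset.single_le_sum (fun k _ => mul_nonneg (hP i k) (hx k)) (Finset.mem_univ j)

lemma negPart_le_mulVec_negPart (hP : ∀ i j, 0 ≤ P i j) {z : ι → ℝ} (hz : P *ᵥ z ≤ z) :
    z⁻ ≤ P *ᵥ z⁻ := by
  have hPz0 : 0 ≤ P *ᵥ z⁻ := by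
    simpa using mulVec_mono_of_nonneg hP (negPart_nonneg z)
  refine sup_le ?_ hPz0
  calc -z ≤ -(P *ᵥ z) := neg_le_neg hz
    _ = P *ᵥ -z := (mulVec_neg z P).symm
    _ ≤ P *ᵥ z⁻ := mulVec_mono_of_nonneg hP (neg_le_negPart z)

lemma MatStable.exists_abs_pow_apply_le [DecidableEq ι] (hP : MatStable P) :
    ∃ c, ∀ k i j, |(P ^ k) i j| ≤ c := by
  choose c hc using fun j => hP (Pi.single j 1)
  obtain ⟨C, hC⟩ := Finite.exists_le c
  refine ⟨C, fun k i j => ?_⟩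
  calc |(P ^ k) i j| = ‖((P ^ k) *ᵥ Pi.single j 1) i‖ := by simp
    _ ≤ ‖(P ^ k) *ᵥ Pi.single j 1‖ := norm_le_pi_norm _ i
    _ ≤ C := (hc j k).trans (hC j)

lemma exists_mulVec_eq_self_of_le_mulVec [DecidableEq ι] (hP : ∀ i j, 0 ≤ P i j)
    (hstab : MatStable P) {x : ι → ℝ} (hx : x ≤ P *ᵥ x) : ∃ v, P *ᵥ v = v ∧ x ≤ v := by
  set y : ℕ → ι → ℝ := fun k => (P ^ k) *ᵥ x
  have hy_succ : ∀ k, y (k + 1) = P *ᵥ y k := fun k => by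
    simp only [y, pow_succ', mulVec_mulVec]
  have hy_mono : Monotone y := by
    refine monotone_nat_of_le_succ fun k => ?_
    induction k with
    | zero => simpa [y] using hx
    | succ k ih => rw [hy_succ, hy_succ (k + 1)]; exact mulVec_mono_of_nonneg hP ih
  have hy_bdd : BddAbove (range y) := by
    obtain ⟨c, hc⟩ := hstab x
    refine ⟨fun _ => c, ?_⟩
    rintro _ ⟨k, rfl⟩ i
    exact (le_abs_self _).trans ((norm_le_pi_norm (y k) i).trans (hc k))
  have hy_lim := tendsto_atTop_ciSup hy_mono hy_bdd
  have hPy_lim : Tendsto (fun k => P *ᵥ y k) atTop (𝓝 (P *ᵥ ⨆ k, y k)) :=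
    ((Continuous.matrix_mulVec continuous_const continuous_id).tendsto _).comp hy_lim
  have hPy_lim' : Tendsto (fun k => P *ᵥ y k) atTop (𝓝 (⨆ k, y k)) := by
    simpa only [Function.comp_def, hy_succ] using hy_lim.comp (tendsto_add_atTop_nat 1)
  exact ⟨_, tendsto_nhds_unique hPy_lim hPy_lim', by simpa [y] using le_ciSup hy_bdd 0⟩

end Nonneg

section Spectrum

variable {ι : Type*} [Fintype ι] [DecidableEq ι]

lemma Matrix.mem_spectrum_iff_exists_mulVec_eq_smul {K : Type*} [Field K] {A : Matrix ι ι K}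
    {μ : K} : μ ∈ spectrum K A ↔ ∃ x ≠ 0, A *ᵥ x = μ • x := by
  rw [← spectrum_toLin', ← Module.End.hasEigenvalue_iff_mem_spectrum]
  constructor
  · intro h
    obtain ⟨x, hx⟩ := h.exists_hasEigenvector
    exact ⟨x, hx.2, by simpa using hx.apply_eq_smul⟩
  · rintro ⟨x, hx, hAx⟩
    exact Module.End.hasEigenvalue_of_hasEigenvector
      ⟨Module.End.mem_eigenspace_iff.2 (by simpa using hAx), hx⟩

lemma norm_le_one_of_mem_spectrum_of_bounded_pow {A : Matrix ι ι ℂ} {c : ℝ}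
    (hA : ∀ k i j, ‖(A ^ k) i j‖ ≤ c) {μ : ℂ} (hμ : μ ∈ spectrum ℂ A) : ‖μ‖ ≤ 1 := by
  obtain ⟨x, hx, hAx⟩ := mem_spectrum_iff_exists_mulVec_eq_smul.1 hμ
  obtain ⟨i, hi⟩ := Function.ne_iff.1 hx
  have hpow : ∀ k : ℕ, (A ^ k) *ᵥ x = μ ^ k • x := fun k => by
    induction k with
    | zero => simp
    | succ k ih => rw [pow_succ', ← mulVec_mulVec, ih, mulVec_smul, hAx, smul_smul, ← pow_succ]
  have hbdd : ∀ k : ℕ, ‖μ‖ ^ k ≤ (∑ j, c * ‖x j‖) / ‖x i‖ := fun k => by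
    rw [le_div_iff₀ (norm_pos_iff.2 hi), ← norm_pow, ← norm_mul, ← smul_eq_mul,
      ← Pi.smul_apply, ← hpow]
    refine (norm_sum_le _ _).trans (Finset.sum_le_sum fun j _ => ?_)
    rw [norm_mul]
    exact mul_le_mul_of_nonneg_right (hA k i j) (norm_nonneg _)
  by_contra! h
  obtain ⟨k, hk⟩ := (tendsto_pow_atTop_atTop_of_one_lt h).eventually_gt_atTop
    ((∑ j, c * ‖x j‖) / ‖x i‖) |>.exists
  exact (hbdd k).not_gt hk

lemma specRad_eq_one_of_bounded_pow {Q : Matrix ι ι ℝ} {c : ℝ}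
    (hQ : ∀ k i j, |(Q ^ k) i j| ≤ c) {v : ι → ℝ} (hv : v ≠ 0) (hQv : Q *ᵥ v = v) :
    SpecRad Q = 1 := by
  -- `SpecRad` builds the spectrum with `Classical.decEq ι`.
  obtain rfl : ‹DecidableEq ι› = Classical.decEq ι := Subsingleton.elim _ _
  have hpow : ∀ k i j, ‖(Q.map ((↑) : ℝ → ℂ) ^ k) i j‖ ≤ c := fun k i j => by
    rw [show Q.map ((↑) : ℝ → ℂ) ^ k = (Q ^ k).map (↑) from
      (map_pow Complex.ofRealHom.mapMatrix Q k).symm]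
    simpa using hQ k i j
  have hone : (1 : ℂ) ∈ spectrum ℂ (Q.map ((↑) : ℝ → ℂ)) := by
    refine mem_spectrum_iff_exists_mulVec_eq_smul.2 ⟨(↑) ∘ v, ?_, ?_⟩
    · simpa [Function.ne_iff] using hv
    · conv_rhs => rw [one_smul, ← hQv]
      exact funext fun i => (Complex.ofRealHom.map_mulVec Q v i).symm
  refine IsGreatest.csSup_eq ⟨⟨1, hone, by simp⟩, ?_⟩
  rintro _ ⟨μ, hμ, rfl⟩
  exact norm_le_one_of_mem_spectrum_of_bounded_pow hpow hμ

end Spectrum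

section Submatrix

variable {ι κ : Type*} [Fintype ι] [Fintype κ] {P : Matrix ι ι ℝ} {f : κ → ι}

lemma pow_submatrix_apply_le [DecidableEq ι] [DecidableEq κ] (hP : ∀ i j, 0 ≤ P i j)
    (hf : f.Injective) (k : ℕ) (a b : κ) : ((P.submatrix f f) ^ k) a b ≤ (P ^ k) (f a) (f b) := by
  induction k generalizing b with
  | zero => simp [one_apply, hf.eq_iff]
  | succ k ih =>
    rw [pow_succ, pow_succ, mul_apply, mul_apply]
    calc ∑ c, ((P.submatrix f f) ^ k) a c * P (f c) (f b)
        ≤ ∑ c, (P ^ k) (f a) (f c) * P (f c) (f b) :=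
          Finset.sum_le_sum fun c _ => mul_le_mul_of_nonneg_right (ih c) (hP _ _)
      _ = ∑ m ∈ Finset.univ.map ⟨f, hf⟩, (P ^ k) (f a) m * P m (f b) := by simp
      _ ≤ ∑ m, (P ^ k) (f a) m * P m (f b) :=
          Finset.sum_le_univ_sum_of_nonneg fun m =>
            mul_nonneg (pow_apply_nonneg hP k _ _) (hP _ _)

lemma submatrix_mulVec_comp (hf : f.Injective) {v : ι → ℝ}
    (hv : ∀ a, ∀ j ∉ Set.range f, P (f a) j * v j = 0) :
    P.submatrix f f *ᵥ (v ∘ f) = (P *ᵥ v) ∘ f :=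
  funext fun a => Fintype.sum_of_injective f hf _ _ (hv a) fun _ => rfl

end Submatrix

section Access

variable {n : ℕ} {P : Matrix (Fin n) (Fin n) ℝ}

lemma pos_of_accessM (hP : ∀ i j, 0 ≤ P i j) {x : Fin n → ℝ} (hx : 0 ≤ x) (hPx : P *ᵥ x ≤ x)
    {i j : Fin n} (hij : AccessM P i j) (hj : 0 < x j) : 0 < x i := by
  induction hij using Relation.ReflTransGen.head_induction_on with
  | refl => exact hj
  | head hik _ ih =>
    exact (mul_pos hik ih).trans_le ((mul_le_mulVec_apply hP hx _ _).trans (hPx _))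

lemma eq_zero_of_accessM (hP : ∀ i j, 0 ≤ P i j) {x : Fin n → ℝ} (hx : 0 ≤ x) (hPx : P *ᵥ x ≤ x)
    {i j : Fin n} (hij : AccessM P i j) (hi : x i = 0) : x j = 0 :=
  (hx j).eq_or_lt.elim Eq.symm fun hj => absurd hi (pos_of_accessM hP hx hPx hij hj).ne'

end Access

lemma Relation.exists_mem_forall_reflTransGen_imp {α : Type*} [Finite α] (r : α → α → Prop)
    {G : Set α} (hG : G.Nonempty) :
    ∃ i ∈ G, ∀ j ∈ G, ReflTransGen r i j → ReflTransGen r j i := by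
  obtain ⟨i, hiG, hmin⟩ :=
    G.toFinite.exists_minimalFor (fun i => {j | ReflTransGen r i j}) G hG
  refine ⟨i, hiG, fun j hjG hij => ?_⟩
  exact hmin hjG (fun k hjk => hij.trans hjk) ReflTransGen.refl

lemma exists_pos_le_smul_of_le {ι : Type*} [Finite ι] {u v : ι → ℝ} (hu : 0 ≤ u) (huv : u ≤ v)
    {i₁ : ι} (hi₁ : 0 < u i₁) : ∃ M > 0, u ≤ M • v ∧ ∃ i, 0 < v i ∧ u i = M * v i := by
  have hvi₁ : 0 < v i₁ := hi₁.trans_le (huv i₁)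
  obtain ⟨i, hvi, hmax⟩ :=
    Set.exists_max_image {i | 0 < v i} (fun i => u i / v i) (Set.toFinite _) ⟨i₁, hvi₁⟩
  refine ⟨u i / v i, (div_pos hi₁ hvi₁).trans_le (hmax i₁ hvi₁), fun j => ?_,
    i, hvi, (div_mul_cancel₀ _ hvi.ne').symm⟩
  rcases (hu j).trans (huv j) |>.eq_or_lt with hvj | hvj
  · simpa [← hvj] using huv j
  · exact (div_le_iff₀ hvj).1 (hmax j hvj)

section Critical

variable {n : ℕ} {P : Matrix (Fin n) (Fin n) ℝ}

lemma isCriticalClass_of_mulVec_eq_self (hP : ∀ i j, 0 ≤ P i j) (hstab : MatStable P)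
    {v : Fin n → ℝ} (hv : 0 ≤ v) (hPv : P *ᵥ v = v) {i₀ : Fin n} (hvi₀ : 0 < v i₀)
    (hfinal : ∀ j, AccessM P i₀ j → 0 < v j → AccessM P j i₀) :
    IsCriticalClass P {j | AccessM P i₀ j ∧ AccessM P j i₀} := by
  set C := {j | AccessM P i₀ j ∧ AccessM P j i₀}
  refine ⟨⟨i₀, rfl⟩, ?_⟩
  -- `SpecRadOn` uses this instance
  let _ : Fintype C := Fintype.ofFinite C
  obtain ⟨c, hc⟩ := hstab.exists_abs_pow_apply_le
  have hinj : (Subtype.val : C → Fin n).Injective := Subtype.val_injective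
  refine specRad_eq_one_of_bounded_pow (Q := P.submatrix Subtype.val Subtype.val) (c := c)
    (fun k a b => ?_) (v := v ∘ Subtype.val) (Function.ne_iff.2 ⟨⟨i₀, .refl, .refl⟩, hvi₀.ne'⟩) ?_
  · exact (abs_of_nonneg (pow_apply_nonneg (fun _ _ => hP _ _) k a b)).trans_le
      ((pow_submatrix_apply_le hP hinj k a b).trans ((le_abs_self _).trans (hc k _ _)))
  · rw [submatrix_mulVec_comp hinj, hPv]
    rintro ⟨a, ha⟩ j hj
    by_contra hne
    have hPaj : 0 < P a j := (hP a j).lt_of_ne' (left_ne_zero_of_mul hne)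
    have hvj : 0 < v j := (hv j).lt_of_ne' (right_ne_zero_of_mul hne)
    have hi₀j : AccessM P i₀ j := ha.1.tail hPaj
    exact hj ⟨⟨j, hi₀j, hfinal j hi₀j hvj⟩, rfl⟩

end Critical

/-- if P is a nonnegative stable matrix, P z ≤ z, and z is nonnegative
on a set S meeting every critical class, then z is nonnegative. -/
theorem stmt10 {n : ℕ} (P : Matrix (Fin n) (Fin n) ℝ)
    (hpos : ∀ i j, 0 ≤ P i j) (hstab : MatStable P)
    (z : Fin n → ℝ) (hz : P.mulVec z ≤ z)
    (S : Set (Fin n)) (hS : ∀ C : Set (Fin n), IsCriticalClass P C → (C ∩ S).Nonempty)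
    (hzS : ∀ i ∈ S, 0 ≤ z i) :
    0 ≤ z := by
  by_contra hneg
  obtain ⟨i₁, hi₁⟩ : ∃ i, z i < 0 := by simpa [Pi.le_def] using hneg
  have hsub := negPart_le_mulVec_negPart hpos hz
  obtain ⟨v, hPv, huv⟩ := exists_mulVec_eq_self_of_le_mulVec hpos hstab hsub
  have hv : 0 ≤ v := (negPart_nonneg z).trans huv
  obtain ⟨M, hM, huMv, i, hvi, hui⟩ :=
    exists_pos_le_smul_of_le (negPart_nonneg z) huv (negPart_pos hi₁)
  set t := M • v - z⁻
  have ht : 0 ≤ t := sub_nonneg.2 huMv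
  have hPt : P *ᵥ t ≤ t := by
    rw [mulVec_sub, mulVec_smul, hPv]
    exact sub_le_sub_left hsub _
  obtain ⟨i₀, ⟨hvi₀, hti₀⟩, hfinal⟩ := Relation.exists_mem_forall_reflTransGen_imp
    (fun i j => 0 < P i j) (G := {i | 0 < v i ∧ t i = 0}) ⟨i, hvi, by simp [t, hui]⟩
  have hC_final : ∀ j, AccessM P i₀ j → 0 < v j → AccessM P j i₀ := fun j hi₀j hvj =>
    hfinal j ⟨hvj, eq_zero_of_accessM hpos ht hPt hi₀j hti₀⟩ hi₀j
  obtain ⟨s, ⟨hi₀s, hsi₀⟩, hsS⟩ :=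
    hS _ (isCriticalClass_of_mulVec_eq_self hpos hstab hv hPv hvi₀ hC_final)
  have hts : t s = M * v s := by simp [t, negPart_eq_zero.2 (hzS s hsS)]
  have hvs : 0 < v s := pos_of_accessM hpos hv hPv.le hsi₀ hvi₀
  exact (mul_pos hM hvs).ne' (hts.symm.trans (eq_zero_of_accessM hpos ht hPt hi₀s hti₀))
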